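/- arXiv:1603.07850 — 8 statements merged into one kernel-verified Lean document; each statement's English description precedes it below -/
import Mathlib

section
/- A set B ⊆ D⁺ is a Markov substitute set of P if and only if every two-element subset {y, y'} ⊆ B is a Markov substitute set of P. -/
def IsMarkovSet {D : Type*} (𝒟 : Set (List D)) (P : List D → ℝ) (B : Set (List D)) : Prop :=
  ∃ β : List D → List D → ℝ,
    (∀ y ∈ B, ∀ y' ∈ B, β y y' = - β y' y) ∧
    ∀ (x₁ x₂ : List D), ∀ y ∈ B, ∀ y' ∈ B,
      x₁ ++ y ++ x₂ ∈ 𝒟 → x₁ ++ y' ++ x₂ ∈ 𝒟 →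
      P (x₁ ++ y' ++ x₂) = P (x₁ ++ y ++ x₂) * Real.exp (β y y')

namespace IsMarkovSet

variable {D : Type*} {𝒟 : Set (List D)} {P : List D → ℝ} {B : Set (List D)}

theorem mono {B' : Set (List D)} (h : IsMarkovSet 𝒟 P B) (hB' : B' ⊆ B) :
    IsMarkovSet 𝒟 P B' := by
  obtain ⟨β, hskew, hsubst⟩ := h
  exact ⟨β, fun y hy y' hy' => hskew y (hB' hy) y' (hB' hy'),
    fun x₁ x₂ y hy y' hy' => hsubst x₁ x₂ y (hB' hy) y' (hB' hy')⟩

/- Indexing the chosen `β` by the unordered pair `{y, y'}` makes the glued coefficients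
skew-symmetric: `y, y'` and `y', y` read off the same function. -/
theorem of_forall_pair (h : ∀ y ∈ B, ∀ y' ∈ B, IsMarkovSet 𝒟 P {y, y'}) :
    IsMarkovSet 𝒟 P B := by
  choose! β hβ using fun (S : Set (List D)) (hS : IsMarkovSet 𝒟 P S) => hS
  refine ⟨fun y y' => β {y, y'} y y', fun y hy y' hy' => ?_,
    fun x₁ x₂ y hy y' hy' => (hβ _ (h y hy y' hy')).2 x₁ x₂ y (by simp) y' (by simp)⟩
  show β {y, y'} y y' = -β {y', y} y' y
  rw [Set.pair_comm y' y]
  exact (hβ _ (h y hy y' hy')).1 y (by simp) y' (by simp)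

end IsMarkovSet

theorem stmt2_general {D : Type*} (𝒟 : Set (List D)) (P : List D → ℝ)
    (B : Set (List D)) :
    IsMarkovSet 𝒟 P B ↔ ∀ y ∈ B, ∀ y' ∈ B, IsMarkovSet 𝒟 P {y, y'} :=
  ⟨fun h y hy y' hy' => h.mono (Set.pair_subset hy hy'), IsMarkovSet.of_forall_pair⟩

theorem stmt2 {D : Type*} [Fintype D] (𝒟 : Set (List D)) (P : List D → ℝ)
    (B : Set (List D)) :
    IsMarkovSet 𝒟 P B ↔ ∀ y ∈ B, ∀ y' ∈ B, IsMarkovSet 𝒟 P {y, y'} :=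
  stmt2_general 𝒟 P B
end

section
/- If B ⊆ D⁺ is a Markov substitute set of P and x ∈ (D*)² is a fixed context, then α(x, B) = {α(x, y) : y ∈ B} is also a Markov substitute set of P, with substitute exponent β(α(x,y), α(x,y')) = β(y,y'). -/
lemma List.injective_append_append {α : Type*} (x₁ x₂ : List α) :
    Function.Injective (fun y : List α => x₁ ++ y ++ x₂) :=
  fun _ _ h => List.append_cancel_left (List.append_cancel_right h)

def IsMarkovSubstituteSet {D : Type*} (𝒟 : Set (List D)) (P : List D → ℝ)
    (B : Set (List D)) (β : List D → List D → ℝ) : Prop :=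
  (∀ y ∈ B, ∀ y' ∈ B, β y y' = - β y' y) ∧
    ∀ (z₁ z₂ : List D), ∀ y ∈ B, ∀ y' ∈ B,
      z₁ ++ y ++ z₂ ∈ 𝒟 → z₁ ++ y' ++ z₂ ∈ 𝒟 →
      P (z₁ ++ y' ++ z₂) = P (z₁ ++ y ++ z₂) * Real.exp (β y y')

namespace IsMarkovSubstituteSet

variable {D : Type*} {𝒟 : Set (List D)} {P : List D → ℝ} {B : Set (List D)}
  {β : List D → List D → ℝ}

/-- The context `(z₁, z₂)` around `x₁ ++ y ++ x₂` is the context `(z₁ ++ x₁, x₂ ++ z₂)` around `y`. -/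
lemma wrap {β' : List D → List D → ℝ} (h : IsMarkovSubstituteSet 𝒟 P B β) (x₁ x₂ : List D)
    (hβ' : ∀ y y', β' (x₁ ++ y ++ x₂) (x₁ ++ y' ++ x₂) = β y y') :
    IsMarkovSubstituteSet 𝒟 P {s | ∃ y ∈ B, s = x₁ ++ y ++ x₂} β' := by
  constructor
  · rintro _ ⟨y, hy, rfl⟩ _ ⟨y', hy', rfl⟩
    rw [hβ', hβ']
    exact h.1 y hy y' hy'
  · rintro z₁ z₂ _ ⟨y, hy, rfl⟩ _ ⟨y', hy', rfl⟩
    rw [hβ']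
    simpa only [List.append_assoc] using h.2 (z₁ ++ x₁) (x₂ ++ z₂) y hy y' hy'

end IsMarkovSubstituteSet

theorem stmt3_general {D : Type*} (𝒟 : Set (List D)) (P : List D → ℝ)
    (B : Set (List D)) (β : List D → List D → ℝ)
    (hskew : ∀ y ∈ B, ∀ y' ∈ B, β y y' = - β y' y)
    (hsub : ∀ (z₁ z₂ : List D), ∀ y ∈ B, ∀ y' ∈ B,
      z₁ ++ y ++ z₂ ∈ 𝒟 → z₁ ++ y' ++ z₂ ∈ 𝒟 →
      P (z₁ ++ y' ++ z₂) = P (z₁ ++ y ++ z₂) * Real.exp (β y y'))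
    (x₁ x₂ : List D) :
    ∃ β' : List D → List D → ℝ,
      (∀ u ∈ {s : List D | ∃ y ∈ B, s = x₁ ++ y ++ x₂},
        ∀ v ∈ {s : List D | ∃ y ∈ B, s = x₁ ++ y ++ x₂}, β' u v = - β' v u) ∧
      (∀ (z₁ z₂ : List D), ∀ u ∈ {s : List D | ∃ y ∈ B, s = x₁ ++ y ++ x₂},
        ∀ v ∈ {s : List D | ∃ y ∈ B, s = x₁ ++ y ++ x₂},
        z₁ ++ u ++ z₂ ∈ 𝒟 → z₁ ++ v ++ z₂ ∈ 𝒟 →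
        P (z₁ ++ v ++ z₂) = P (z₁ ++ u ++ z₂) * Real.exp (β' u v)) ∧
      (∀ y ∈ B, ∀ y' ∈ B, β' (x₁ ++ y ++ x₂) (x₁ ++ y' ++ x₂) = β y y') := by
  set unwrap := Function.invFun fun y : List D => x₁ ++ y ++ x₂
  have hunwrap : ∀ y, unwrap (x₁ ++ y ++ x₂) = y :=
    Function.leftInverse_invFun (List.injective_append_append x₁ x₂)
  set β' := fun u v => β (unwrap u) (unwrap v)
  have hβ' : ∀ y y', β' (x₁ ++ y ++ x₂) (x₁ ++ y' ++ x₂) = β y y' := by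
    simp only [β', hunwrap, implies_true]
  obtain ⟨hskew', hsub'⟩ := IsMarkovSubstituteSet.wrap ⟨hskew, hsub⟩ x₁ x₂ hβ'
  exact ⟨β', hskew', hsub', fun y _ y' _ => hβ' y y'⟩

theorem stmt3 {D : Type*} [Fintype D] (𝒟 : Set (List D)) (P : List D → ℝ)
    (B : Set (List D)) (β : List D → List D → ℝ)
    (hskew : ∀ y ∈ B, ∀ y' ∈ B, β y y' = - β y' y)
    (hsub : ∀ (z₁ z₂ : List D), ∀ y ∈ B, ∀ y' ∈ B,
      z₁ ++ y ++ z₂ ∈ 𝒟 → z₁ ++ y' ++ z₂ ∈ 𝒟 →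
      P (z₁ ++ y' ++ z₂) = P (z₁ ++ y ++ z₂) * Real.exp (β y y'))
    (x₁ x₂ : List D) :
    ∃ β' : List D → List D → ℝ,
      (∀ u ∈ {s : List D | ∃ y ∈ B, s = x₁ ++ y ++ x₂},
        ∀ v ∈ {s : List D | ∃ y ∈ B, s = x₁ ++ y ++ x₂}, β' u v = - β' v u) ∧
      (∀ (z₁ z₂ : List D), ∀ u ∈ {s : List D | ∃ y ∈ B, s = x₁ ++ y ++ x₂},
        ∀ v ∈ {s : List D | ∃ y ∈ B, s = x₁ ++ y ++ x₂},
        z₁ ++ u ++ z₂ ∈ 𝒟 → z₁ ++ v ++ z₂ ∈ 𝒟 →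
        P (z₁ ++ v ++ z₂) = P (z₁ ++ u ++ z₂) * Real.exp (β' u v)) ∧
      (∀ y ∈ B, ∀ y' ∈ B, β' (x₁ ++ y ++ x₂) (x₁ ++ y' ++ x₂) = β y y') :=
  stmt3_general 𝒟 P B β hskew hsub x₁ x₂
end

section
/- Given any domain 𝒟 ⊆ D⁺, any family 𝓑 of subsets of D⁺, any finite set 𝒞 of equivalence classes of ∼_𝓑 on 𝒟, any everywhere-positive strict sub-probability ξ on D, and any probability measure μ on 𝒞 with full support, the measure P(s) = Σ_{C ∈ 𝒞} 1(s ∈ C)·μ(C)·P̃(s | s ∈ C) (where P̃ is the independent process from ξ) is a 𝓑-Markov substitute measure on 𝒟 with support exactly ⋃_{C∈𝒞} C. -/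
def SubstRel {D : Type*} (𝒟 : Set (List D)) (𝓑 : Set (Set (List D)))
    (s s' : List D) : Prop :=
  s ∈ 𝒟 ∧ s' ∈ 𝒟 ∧ ∃ (x₁ x₂ : List D) (B : Set (List D)), B ∈ 𝓑 ∧
    ∃ y ∈ B, ∃ y' ∈ B, s = x₁ ++ y ++ x₂ ∧ s' = x₁ ++ y' ++ x₂

noncomputable def indepP {D : Type*} (ξ : D → ℝ) (r : ℝ) (s : List D) : ℝ :=
  match s with
  | [] => 0
  | _ :: _ => (r / (1 - r)) * (s.map ξ).prod

/-!
The independent process `P̃` satisfies the Markov identity for every `B` at once: replacing `y` by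
`y'` inside a nonempty string multiplies `P̃` by `∏ ξ(y') / ∏ ξ(y)`, which depends on `y, y'` only.
Conditioning on a `∼_𝓑`-class and mixing finitely many classes with positive weights preserves
this identity, because the two strings `x₁ ++ y ++ x₂` and `x₁ ++ y' ++ x₂` lie in the same
classes.
-/

open Relation

theorem Relation.EqvGen.mem_iff {α : Type*} {R : α → α → Prop} {S : Set α}
    (hR : ∀ a b, R a b → (a ∈ S ↔ b ∈ S)) {a b : α} (h : EqvGen R a b) : a ∈ S ↔ b ∈ S := by
  induction h with
  | rel x y hxy => exact hR x y hxy
  | refl => exact Iff.rfl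
  | symm _ _ _ ih => exact ih.symm
  | trans _ _ _ _ _ ih₁ ih₂ => exact ih₁.trans ih₂

theorem Relation.EqvGen.left_iff_of_rel {α : Type*} {R : α → α → Prop} {s₀ a b : α}
    (h : R a b) : EqvGen R s₀ a ↔ EqvGen R s₀ b :=
  ⟨fun ha => ha.trans _ _ _ (.rel _ _ h), fun hb => hb.trans _ _ _ (.symm _ _ (.rel _ _ h))⟩

theorem substRel_class_subset {D : Type*} {𝒟 : Set (List D)} {𝓑 : Set (Set (List D))}
    {s₀ : List D} (hs₀ : s₀ ∈ 𝒟) : {t | EqvGen (SubstRel 𝒟 𝓑) s₀ t} ⊆ 𝒟 :=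
  fun _ ht => (EqvGen.mem_iff (fun _ _ h => iff_of_true h.1 h.2.1) ht).1 hs₀

section ClassMixture

variable {α : Type*} (𝒞 : Finset (Set α)) (μ : Set α → ℝ) (p : α → ℝ)

noncomputable def classMixture (s : α) : ℝ :=
  ∑ C ∈ 𝒞, C.indicator (fun t => μ C * p t / ∑' u, C.indicator p u) s

variable {𝒞 μ p}

theorem tsum_indicator_pos (hp : Summable p) (hp0 : ∀ s, 0 ≤ p s) {C : Set α} {s : α}
    (hs : s ∈ C) (hps : 0 < p s) : 0 < ∑' u, C.indicator p u :=
  (hp.indicator C).tsum_pos (fun u => C.indicator_nonneg (fun u _ => hp0 u) u) s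
    (by rwa [Set.indicator_of_mem hs])

theorem classMixture_nonneg (hp : ∀ s, 0 ≤ p s) (hμ : ∀ C ∈ 𝒞, 0 ≤ μ C) (s : α) :
    0 ≤ classMixture 𝒞 μ p s :=
  Finset.sum_nonneg fun C hC => Set.indicator_nonneg (fun t _ =>
    div_nonneg (mul_nonneg (hμ C hC) (hp t))
      (tsum_nonneg fun u => Set.indicator_nonneg (fun u _ => hp u) u)) s

theorem tsum_classMixture (hp : Summable p) (hZ : ∀ C ∈ 𝒞, ∑' u, C.indicator p u ≠ 0) :
    ∑' s, classMixture 𝒞 μ p s = ∑ C ∈ 𝒞, μ C := by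
  have hterm : ∀ C : Set α, C.indicator (fun t => μ C * p t / ∑' u, C.indicator p u)
      = fun t => μ C / (∑' u, C.indicator p u) * C.indicator p t := by
    intro C
    funext t
    by_cases ht : t ∈ C <;> simp [ht, mul_div_right_comm]
  unfold classMixture
  rw [Summable.tsum_finsetSum fun C _ => by rw [hterm]; exact (hp.indicator C).mul_left _]
  refine Finset.sum_congr rfl fun C hC => ?_
  rw [hterm, tsum_mul_left, div_mul_cancel₀ _ (hZ C hC)]

theorem support_classMixture (hp : ∀ s, 0 ≤ p s) (hμ : ∀ C ∈ 𝒞, 0 < μ C)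
    (hpos : ∀ C ∈ 𝒞, ∀ s ∈ C, 0 < p s) (hZ : ∀ C ∈ 𝒞, 0 < ∑' u, C.indicator p u) :
    {s | classMixture 𝒞 μ p s ≠ 0} = ⋃ C ∈ 𝒞, C := by
  ext s
  simp only [Set.mem_ofPred_eq, Set.mem_iUnion]
  constructor
  · intro hs
    obtain ⟨C, hC, hne⟩ := Finset.exists_ne_zero_of_sum_ne_zero hs
    exact ⟨C, hC, Set.mem_of_indicator_ne_zero hne⟩
  · rintro ⟨C, hC, hsC⟩
    refine (Finset.sum_pos' (fun C' hC' => ?_) ⟨C, hC, ?_⟩).ne'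
    · exact Set.indicator_nonneg (fun t _ =>
        div_nonneg (mul_nonneg (hμ C' hC').le (hp t)) (hZ C' hC').le) s
    · rw [Set.indicator_of_mem hsC]
      exact div_pos (mul_pos (hμ C hC) (hpos C hC s hsC)) (hZ C hC)

theorem classMixture_eq_mul {s s' : α} {k : ℝ} (hss' : ∀ C ∈ 𝒞, s ∈ C ↔ s' ∈ C)
    (hp : p s' = p s * k) : classMixture 𝒞 μ p s' = classMixture 𝒞 μ p s * k := by
  unfold classMixture
  rw [Finset.sum_mul]
  refine Finset.sum_congr rfl fun C hC => ?_
  by_cases hs : s ∈ C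
  · rw [Set.indicator_of_mem ((hss' C hC).1 hs), Set.indicator_of_mem hs, hp]
    ring
  · rw [Set.indicator_of_notMem (mt (hss' C hC).2 hs), Set.indicator_of_notMem hs, zero_mul]

end ClassMixture

theorem isMarkovSet_classMixture {D : Type*} {𝒟 : Set (List D)} {𝓑 : Set (Set (List D))}
    {B : Set (List D)} {𝒞 : Finset (Set (List D))} {μ : Set (List D) → ℝ} {p : List D → ℝ}
    (hB : B ∈ 𝓑) (h𝒞 : ∀ C ∈ 𝒞, ∀ s t, SubstRel 𝒟 𝓑 s t → (s ∈ C ↔ t ∈ C))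
    (hp : IsMarkovSet 𝒟 p B) : IsMarkovSet 𝒟 (classMixture 𝒞 μ p) B := by
  obtain ⟨β, hβ, hpβ⟩ := hp
  refine ⟨β, hβ, fun x₁ x₂ y hy y' hy' hs hs' => classMixture_eq_mul (fun C hC => ?_)
    (hpβ x₁ x₂ y hy y' hy' hs hs')⟩
  exact h𝒞 C hC _ _ ⟨hs, hs', x₁, x₂, B, hB, y, hy, y', hy', rfl, rfl⟩

section IndepProcess

variable {D : Type*} (ξ : D → ℝ) (r : ℝ)

theorem indepP_eq_update [DecidableEq D] :
    indepP ξ r = Function.update (fun s => r / (1 - r) * (s.map ξ).prod) [] 0 := by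
  funext s
  cases s <;> simp [indepP]

theorem indepP_of_ne_nil {s : List D} (hs : s ≠ []) :
    indepP ξ r s = r / (1 - r) * (s.map ξ).prod := by
  cases s
  · exact absurd rfl hs
  · rfl

variable {ξ r}

theorem prod_map_nonneg (hξ : ∀ w, 0 ≤ ξ w) (s : List D) : 0 ≤ (s.map ξ).prod :=
  List.prod_nonneg fun x hx => by
    obtain ⟨w, _, rfl⟩ := List.mem_map.1 hx
    exact hξ w

theorem summable_prod_map [Fintype D] (hξ : ∀ w, 0 ≤ ξ w) (hlt : ∑ w, ξ w < 1) :
    Summable fun s : List D => (s.map ξ).prod := by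
  classical
  -- group the strings by length: the strings of length `n` contribute `(∑ w, ξ w) ^ n`
  rw [← (List.equivSigmaTuple (α := D)).symm.summable_iff,
    summable_sigma_of_nonneg (f := (fun s : List D => (s.map ξ).prod) ∘ _) fun _ => prod_map_nonneg hξ _]
  refine ⟨fun _ => .of_finite, (summable_geometric_of_lt_one
    (Finset.sum_nonneg fun w _ => hξ w) hlt).congr fun n => ?_⟩
  simp [List.equivSigmaTuple, List.map_ofFn, List.prod_ofFn, tsum_fintype, Finset.sum_pow']

theorem summable_indepP [Fintype D] (hξ : ∀ w, 0 ≤ ξ w) (hlt : ∑ w, ξ w < 1) :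
    Summable (indepP ξ r) := by
  classical
  rw [indepP_eq_update]
  exact ((summable_prod_map hξ hlt).mul_left _).update _ _

theorem indepP_nonneg (hξ : ∀ w, 0 ≤ ξ w) (hr : 0 ≤ r) (hr1 : r ≤ 1) (s : List D) :
    0 ≤ indepP ξ r s := by
  cases s with
  | nil => exact le_rfl
  | cons a t =>
    exact mul_nonneg (div_nonneg hr (sub_nonneg.2 hr1)) (prod_map_nonneg hξ _)

theorem prod_map_pos (hξ : ∀ w, 0 < ξ w) (s : List D) : 0 < (s.map ξ).prod :=
  List.prod_pos fun x hx => by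
    obtain ⟨w, _, rfl⟩ := List.mem_map.1 hx
    exact hξ w

theorem indepP_pos (hξ : ∀ w, 0 < ξ w) (hr : 0 < r) (hr1 : r < 1) {s : List D} (hs : s ≠ []) :
    0 < indepP ξ r s := by
  rw [indepP_of_ne_nil ξ r hs]
  exact mul_pos (div_pos hr (sub_pos.2 hr1)) (prod_map_pos hξ s)

theorem isMarkovSet_indepP {𝒟 : Set (List D)} (h𝒟 : ∀ s ∈ 𝒟, s ≠ []) (hξ : ∀ w, 0 < ξ w)
    (B : Set (List D)) : IsMarkovSet 𝒟 (indepP ξ r) B := by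
  refine ⟨fun y y' => Real.log (y'.map ξ).prod - Real.log (y.map ξ).prod,
    fun _ _ _ _ => by ring, fun x₁ x₂ y _ y' _ hs hs' => ?_⟩
  have hy := (prod_map_pos hξ y).ne'
  rw [indepP_of_ne_nil ξ r (h𝒟 _ hs), indepP_of_ne_nil ξ r (h𝒟 _ hs'), Real.exp_sub,
    Real.exp_log (prod_map_pos hξ y'), Real.exp_log (prod_map_pos hξ y)]
  simp only [List.map_append, List.prod_append]
  field_simp

end IndepProcess

theorem stmt10 {D : Type*} [Fintype D] [Nonempty D]
    (𝒟 : Set (List D)) (h𝒟 : ∀ s ∈ 𝒟, s ≠ ([] : List D))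
    (𝓑 : Set (Set (List D)))
    (ξ : D → ℝ) (hξpos : ∀ w, 0 < ξ w) (hξlt : ∑ w, ξ w < 1)
    (𝒞 : Finset (Set (List D)))
    (hclass : ∀ C ∈ 𝒞, ∃ s₀ ∈ 𝒟, C = {t | Relation.EqvGen (SubstRel 𝒟 𝓑) s₀ t})
    (μ : Set (List D) → ℝ) (hμpos : ∀ C ∈ 𝒞, 0 < μ C) (hμ1 : ∑ C ∈ 𝒞, μ C = 1) :
    letI r : ℝ := 1 - ∑ w, ξ w
    letI Pt : List D → ℝ := indepP ξ r
    letI Z : Set (List D) → ℝ := fun C => ∑' t : List D, Set.indicator C Pt t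
    letI P : List D → ℝ := fun s => ∑ C ∈ 𝒞, Set.indicator C (fun t => μ C * Pt t / Z C) s
    (∀ s, 0 ≤ P s) ∧ (∑' s : List D, P s) = 1 ∧ (∀ s, P s ≠ 0 → s ∈ 𝒟) ∧
      (∀ B ∈ 𝓑, IsMarkovSet 𝒟 P B) ∧
      {s | P s ≠ 0} = ⋃ C ∈ 𝒞, (C : Set (List D)) := by
  have hr : 0 < 1 - ∑ w, ξ w := sub_pos.2 hξlt
  have hr1 : 1 - ∑ w, ξ w < 1 :=
    sub_lt_self _ (Finset.sum_pos (fun w _ => hξpos w) Finset.univ_nonempty)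
  set p := indepP ξ (1 - ∑ w, ξ w)
  have hp : ∀ s, 0 ≤ p s := indepP_nonneg (fun w => (hξpos w).le) hr.le hr1.le
  have hpsum : Summable p := summable_indepP (fun w => (hξpos w).le) hξlt
  have hsub : ∀ C ∈ 𝒞, C ⊆ 𝒟 := fun C hC => by
    obtain ⟨s₀, hs₀, rfl⟩ := hclass C hC
    exact substRel_class_subset hs₀
  have hpos : ∀ C ∈ 𝒞, ∀ s ∈ C, 0 < p s := fun C hC s hs =>
    indepP_pos hξpos hr hr1 (h𝒟 s (hsub C hC hs))
  have hZ : ∀ C ∈ 𝒞, 0 < ∑' u, C.indicator p u := fun C hC => by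
    obtain ⟨s₀, -, hC'⟩ := hclass C hC
    have hs₀ : s₀ ∈ C := hC' ▸ EqvGen.refl s₀
    exact tsum_indicator_pos hpsum hp hs₀ (hpos C hC s₀ hs₀)
  have hsupp := support_classMixture hp hμpos hpos hZ
  refine ⟨classMixture_nonneg hp fun C hC => (hμpos C hC).le,
    (tsum_classMixture hpsum fun C hC => (hZ C hC).ne').trans hμ1, fun s hs => ?_,
    fun B hB => isMarkovSet_classMixture hB (fun C hC s t hst => ?_)
      (isMarkovSet_indepP h𝒟 hξpos B), hsupp⟩
  · obtain ⟨C, hC, hsC⟩ : ∃ C ∈ 𝒞, s ∈ C := by simpa using hsupp.subset hs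
    exact hsub C hC hsC
  · obtain ⟨s₀, -, rfl⟩ := hclass C hC
    exact EqvGen.left_iff_of_rel hst
end

section
/- If two families 𝓑 and 𝓑' of subsets of D⁺ define the same class of Markov substitute measures on a domain 𝒟 (𝔐(𝒟,𝓑) = 𝔐(𝒟,𝓑')), then the equivalence relations ∼_𝓑 and ∼_𝓑' on 𝒟 coincide, i.e., the partitions 𝒟/∼_𝓑 and 𝒟/∼_𝓑' are equal. -/
/-- `P ∈ 𝔐(𝒟, 𝓑)`: `P` is a `𝓑`-Markov substitute probability measure on `𝒟`. -/
def IsMSM {D : Type*} (𝒟 : Set (List D)) (𝓑 : Set (Set (List D)))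
    (P : List D → ℝ) : Prop :=
  (∀ s, 0 ≤ P s) ∧ (∑' s : List D, P s) = 1 ∧ (∀ s, P s ≠ 0 → s ∈ 𝒟) ∧
    ∀ B ∈ 𝓑, IsMarkovSet 𝒟 P B

/-!
A `𝓑`-Markov substitute measure multiplies its mass by a positive factor `exp (β y y')` under each
elementary substitution, so its support is a union of `∼_𝓑`-classes. Take `P ∈ 𝔐(𝒟, 𝓑')` supported
exactly on the `∼_𝓑'`-class of `s`; since `P` is also in `𝔐(𝒟, 𝓑)`, its support contains the
`∼_𝓑`-class of `s`, so `∼_𝓑` refines `∼_𝓑'`. Exchanging the roles of `𝓑` and `𝓑'` gives equality.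
-/

section

variable {D : Type*} {𝒟 : Set (List D)} {𝓑 𝓑' : Set (Set (List D))} {P : List D → ℝ}

theorem SubstRel.symm {s s' : List D} (h : SubstRel 𝒟 𝓑 s s') : SubstRel 𝒟 𝓑 s' s := by
  obtain ⟨hs, hs', x₁, x₂, B, hB, y, hy, y', hy', rfl, rfl⟩ := h
  exact ⟨hs', hs, x₁, x₂, B, hB, y', hy', y, hy, rfl, rfl⟩

theorem IsMarkovSet.ne_zero_of_ne_zero {B : Set (List D)} (hP : IsMarkovSet 𝒟 P B)
    {x₁ x₂ y y' : List D} (hy : y ∈ B) (hy' : y' ∈ B)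
    (hs : x₁ ++ y ++ x₂ ∈ 𝒟) (hs' : x₁ ++ y' ++ x₂ ∈ 𝒟) (hPs : P (x₁ ++ y ++ x₂) ≠ 0) :
    P (x₁ ++ y' ++ x₂) ≠ 0 := by
  obtain ⟨β, -, hβ⟩ := hP
  rw [hβ x₁ x₂ y hy y' hy' hs hs']
  exact mul_ne_zero hPs (Real.exp_ne_zero _)

theorem IsMSM.ne_zero_of_substRel (hP : IsMSM 𝒟 𝓑 P) {s s' : List D}
    (h : SubstRel 𝒟 𝓑 s s') (hPs : P s ≠ 0) : P s' ≠ 0 := by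
  obtain ⟨hs, hs', x₁, x₂, B, hB, y, hy, y', hy', rfl, rfl⟩ := h
  exact (hP.2.2.2 B hB).ne_zero_of_ne_zero hy hy' hs hs' hPs

theorem IsMSM.ne_zero_iff_of_eqvGen (hP : IsMSM 𝒟 𝓑 P) {s s' : List D}
    (h : Relation.EqvGen (SubstRel 𝒟 𝓑) s s') : P s ≠ 0 ↔ P s' ≠ 0 := by
  induction h with
  | rel a b hab => exact ⟨hP.ne_zero_of_substRel hab, hP.ne_zero_of_substRel hab.symm⟩
  | refl => exact Iff.rfl
  | symm _ _ _ ih => exact ih.symm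
  | trans _ _ _ _ _ ih₁ ih₂ => exact ih₁.trans ih₂

theorem eqvGen_substRel_of_support_eq (hP : IsMSM 𝒟 𝓑 P) {s s' : List D}
    (hsupp : {t | P t ≠ 0} = {t | Relation.EqvGen (SubstRel 𝒟 𝓑') s t})
    (h : Relation.EqvGen (SubstRel 𝒟 𝓑) s s') : Relation.EqvGen (SubstRel 𝒟 𝓑') s s' := by
  have hPs : P s ≠ 0 := (Set.ext_iff.mp hsupp s).mpr (Relation.EqvGen.refl s)
  exact (Set.ext_iff.mp hsupp s').mp ((hP.ne_zero_iff_of_eqvGen h).mp hPs)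

end

theorem stmt12_general {D : Type*}
    (𝒟 : Set (List D)) (𝓑 𝓑' : Set (Set (List D)))
    (heq : ∀ P : List D → ℝ, IsMSM 𝒟 𝓑 P ↔ IsMSM 𝒟 𝓑' P)
    (hreal : ∀ s₀ ∈ 𝒟, ∃ P : List D → ℝ, IsMSM 𝒟 𝓑 P ∧
      {s | P s ≠ 0} = {t | Relation.EqvGen (SubstRel 𝒟 𝓑) s₀ t})
    (hreal' : ∀ s₀ ∈ 𝒟, ∃ P : List D → ℝ, IsMSM 𝒟 𝓑' P ∧
      {s | P s ≠ 0} = {t | Relation.EqvGen (SubstRel 𝒟 𝓑') s₀ t}) :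
    ∀ s ∈ 𝒟, ∀ s' ∈ 𝒟,
      (Relation.EqvGen (SubstRel 𝒟 𝓑) s s' ↔ Relation.EqvGen (SubstRel 𝒟 𝓑') s s') := by
  intro s hs s' _
  obtain ⟨P, hP, hsupp⟩ := hreal s hs
  obtain ⟨P', hP', hsupp'⟩ := hreal' s hs
  exact ⟨eqvGen_substRel_of_support_eq ((heq P').mpr hP') hsupp',
    eqvGen_substRel_of_support_eq ((heq P).mp hP) hsupp⟩

theorem stmt12 {D : Type*} [Fintype D]
    (𝒟 : Set (List D)) (𝓑 𝓑' : Set (Set (List D)))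
    (heq : ∀ P : List D → ℝ, IsMSM 𝒟 𝓑 P ↔ IsMSM 𝒟 𝓑' P)
    (hreal : ∀ s₀ ∈ 𝒟, ∃ P : List D → ℝ, IsMSM 𝒟 𝓑 P ∧
      {s | P s ≠ 0} = {t | Relation.EqvGen (SubstRel 𝒟 𝓑) s₀ t})
    (hreal' : ∀ s₀ ∈ 𝒟, ∃ P : List D → ℝ, IsMSM 𝒟 𝓑' P ∧
      {s | P s ≠ 0} = {t | Relation.EqvGen (SubstRel 𝒟 𝓑') s₀ t}) :
    ∀ s ∈ 𝒟, ∀ s' ∈ 𝒟,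
      (Relation.EqvGen (SubstRel 𝒟 𝓑) s s' ↔ Relation.EqvGen (SubstRel 𝒟 𝓑') s s') :=
  stmt12_general 𝒟 𝓑 𝓑' heq hreal hreal'
end

section
/- A probability measure P supported in 𝒟 is 𝓑-Markov on 𝒟 if and only if it is 𝓟'-Markov on 𝒟, where 𝓟' = { {y, y'} : y ≠ y', y, y' ∈ B for some B ∈ 𝓑 } is the set of all unordered pairs drawn from members of 𝓑. -/
-- Either `p = q = 0`, or `r + s = 0` and then `(r - s) / 2 = r`.
lemma eq_mul_exp_half_sub {p q r s : ℝ} (hq : q = p * Real.exp r) (hp : p = q * Real.exp s) :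
    q = p * Real.exp ((r - s) / 2) := by
  rcases eq_or_ne p 0 with h0 | h0
  · simp [hq, h0]
  have hexp : Real.exp (r + s) = 1 := by
    refine mul_left_cancel₀ h0 ?_
    rw [mul_one, Real.exp_add, ← mul_assoc, ← hq, ← hp]
  have hsum : r + s = 0 := Real.exp_eq_one_iff _ |>.mp hexp
  rw [hq, show (r - s) / 2 = r by linarith]

section

variable {D : Type*} {𝒟 : Set (List D)} {P : List D → ℝ}

lemma IsMarkovSet.mono_s13 {B B' : Set (List D)} (hB : IsMarkovSet 𝒟 P B) (h : B' ⊆ B) :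
    IsMarkovSet 𝒟 P B' := by
  obtain ⟨β, hskew, hβ⟩ := hB
  exact ⟨β, fun y hy y' hy' => hskew y (h hy) y' (h hy'),
    fun x₁ x₂ y hy y' hy' => hβ x₁ x₂ y (h hy) y' (h hy')⟩

-- Skew-symmetry comes for free: replace the exponent `r y y'` by `(r y y' - r y' y) / 2`.
lemma isMarkovSet_of_forall_exists_exp {B : Set (List D)}
    (h : ∀ y ∈ B, ∀ y' ∈ B, ∃ r : ℝ, ∀ x₁ x₂ : List D,
      x₁ ++ y ++ x₂ ∈ 𝒟 → x₁ ++ y' ++ x₂ ∈ 𝒟 →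
      P (x₁ ++ y' ++ x₂) = P (x₁ ++ y ++ x₂) * Real.exp r) :
    IsMarkovSet 𝒟 P B := by
  choose! r hr using h
  refine ⟨fun y y' => (r y y' - r y' y) / 2, fun y _ y' _ => by ring, ?_⟩
  intro x₁ x₂ y hy y' hy' h₁ h₂
  exact eq_mul_exp_half_sub (hr y hy y' hy' x₁ x₂ h₁ h₂) (hr y' hy' y hy x₁ x₂ h₂ h₁)

lemma isMarkovSet_of_pairs {B : Set (List D)}
    (h : ∀ y ∈ B, ∀ y' ∈ B, y ≠ y' → IsMarkovSet 𝒟 P {y, y'}) :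
    IsMarkovSet 𝒟 P B := by
  refine isMarkovSet_of_forall_exists_exp fun y hy y' hy' => ?_
  rcases eq_or_ne y y' with rfl | hne
  · exact ⟨0, fun _ _ _ _ => by rw [Real.exp_zero, mul_one]⟩
  · obtain ⟨β, -, hβ⟩ := h y hy y' hy' hne
    exact ⟨β y y', fun x₁ x₂ => hβ x₁ x₂ y (by simp) y' (by simp)⟩

end

theorem stmt13_general {D : Type*} (𝒟 : Set (List D)) (P : List D → ℝ)
    (𝓑 : Set (Set (List D))) :
    (∀ B ∈ 𝓑, IsMarkovSet 𝒟 P B) ↔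
      (∀ y y' : List D, y ≠ y' → (∃ B ∈ 𝓑, y ∈ B ∧ y' ∈ B) →
        IsMarkovSet 𝒟 P {y, y'}) := by
  constructor
  · rintro h y y' - ⟨B, hB, hy, hy'⟩
    exact (h B hB).mono_s13 (Set.insert_subset hy (Set.singleton_subset_iff.mpr hy'))
  · intro h B hB
    exact isMarkovSet_of_pairs fun y hy y' hy' hne => h y y' hne ⟨B, hB, hy, hy'⟩

theorem stmt13 {D : Type*} [Fintype D] (𝒟 : Set (List D)) (P : List D → ℝ)
    (𝓑 : Set (Set (List D))) :
    (∀ B ∈ 𝓑, IsMarkovSet 𝒟 P B) ↔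
      (∀ y y' : List D, y ≠ y' → (∃ B ∈ 𝓑, y ∈ B ∧ y' ∈ B) →
        IsMarkovSet 𝒟 P {y, y'}) :=
  stmt13_general 𝒟 P 𝓑
end

section
/- Let D = {a, b, c} and 𝓑 = {{[a,b],[a]}, {[b,c],[c]}}, and let C₁ = { a·bⁿ·c : n ∈ ℕ } ⊆ D⁺. For any probability measure P on D⁺ supported in C₁ that is 𝓑-Markov on domain D⁺, there exists r ∈ (0,1) such that P(a·bⁿ·c) = r·(1−r)ⁿ for all n ∈ ℕ. Conversely every such geometric measure is 𝓑-Markov on D⁺. -/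
/-- With the dictionary `D = {a, b, c}` encoded as `Fin 3` (`a = 0`, `b = 1`, `c = 2`),
the string `a bⁿ c`. -/
def wABC (n : ℕ) : List (Fin 3) := [0] ++ List.replicate n 1 ++ [2]

/-- The component `C₁ = { a bⁿ c : n ∈ ℕ }`. -/
def C1 : Set (List (Fin 3)) := {s | ∃ n, s = wABC n}

/-- The family `𝓑 = { {ab, a}, {bc, c} }`. -/
def Bfam : Set (Set (List (Fin 3))) := {{[0, 1], [0]}, {[1, 2], [2]}}

/-- The domain `D⁺` of all nonempty strings. -/
def Dplus : Set (List (Fin 3)) := {s | s ≠ []}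

/-!
Replacing the leading `a` of `a bⁿ c` by `ab` gives `a bⁿ⁺¹ c`, so the Markov property for
`{ab, a}` makes `n ↦ P (a bⁿ c)` geometric with a positive ratio `t`; total mass one forces
`t < 1` and `P (a c) = 1 - t`. Conversely, for geometric `P` supported on `C₁`, replacing `a` by
`ab` (or `c` by `bc`) inside any context either turns some `a bⁿ c` into `a bⁿ⁺¹ c` or leaves
both strings outside `C₁`, so the ratio of the two probabilities is always `1 - r`.
-/

theorem IsMarkovSet.exists_ratio {D : Type*} {𝒟 : Set (List D)} {P : List D → ℝ}
    {B : Set (List D)} (hP : IsMarkovSet 𝒟 P B) {y y' : List D} (hy : y ∈ B) (hy' : y' ∈ B) :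
    ∃ t > 0, ∀ x₁ x₂ : List D, x₁ ++ y ++ x₂ ∈ 𝒟 → x₁ ++ y' ++ x₂ ∈ 𝒟 →
      P (x₁ ++ y' ++ x₂) = P (x₁ ++ y ++ x₂) * t := by
  obtain ⟨β, -, hβ⟩ := hP
  exact ⟨Real.exp (β y y'), Real.exp_pos _, fun x₁ x₂ => hβ x₁ x₂ y hy y' hy'⟩

theorem isMarkovSet_pair {D : Type*} (𝒟 : Set (List D)) {P : List D → ℝ} {y y' : List D}
    {t : ℝ} (ht : 0 < t) (hP : ∀ x₁ x₂ : List D, P (x₁ ++ y' ++ x₂) = P (x₁ ++ y ++ x₂) * t) :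
    IsMarkovSet 𝒟 P {y', y} := by
  classical
  let ℓ : List D → ℝ := fun z => if z = y' then Real.log t else 0
  refine ⟨fun u v => ℓ v - ℓ u, fun _ _ _ _ => by ring, ?_⟩
  rintro x₁ x₂ u (rfl | rfl) v (rfl | rfl) - -
  · simp
  · by_cases h : v = u
    · subst h; simp
    · simp only [ℓ, if_pos rfl, if_neg h, zero_sub, Real.exp_neg, Real.exp_log ht, hP]
      field_simp
  · by_cases h : v = u
    · subst h; simp
    · simp only [ℓ, if_pos rfl, if_neg (Ne.symm h), sub_zero, Real.exp_log ht, hP]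
  · simp

theorem exists_geometric_of_tsum_eq_one {p : ℕ → ℝ} {t : ℝ} (ht : 0 < t)
    (hp : ∀ n, p (n + 1) = p n * t) (hsum : ∑' n, p n = 1) :
    ∃ r ∈ Set.Ioo (0 : ℝ) 1, ∀ n, p n = r * (1 - r) ^ n := by
  have hpow : ∀ n, p n = p 0 * t ^ n := by
    intro n
    induction n with
    | zero => simp
    | succ n ih => rw [hp, ih, pow_succ, mul_assoc]
  rw [tsum_congr hpow] at hsum
  have hsummable : Summable fun n => p 0 * t ^ n := by
    by_contra h
    rw [tsum_eq_zero_of_not_summable h] at hsum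
    exact zero_ne_one hsum
  have hp0 : p 0 ≠ 0 := by
    intro h
    simp [h] at hsum
  have ht1 : t < 1 := by
    have := summable_geometric_iff_norm_lt_one.mp ((summable_mul_left_iff hp0).mp hsummable)
    rwa [Real.norm_of_nonneg ht.le] at this
  rw [tsum_mul_left, tsum_geometric_of_lt_one ht.le ht1, mul_inv_eq_one₀ (by linarith)] at hsum
  refine ⟨1 - t, ⟨by linarith, by linarith⟩, fun n => ?_⟩
  rw [hpow, hsum, sub_sub_cancel]

theorem List.eq_nil_of_append_cons_eq_cons {α : Type*} {a : α} {x₁ x₂ l : List α}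
    (ha : a ∉ l) (h : x₁ ++ a :: x₂ = a :: l) : x₁ = [] ∧ x₂ = l := by
  rcases x₁ with _ | ⟨b, x₁⟩
  · simpa using h
  · simp only [List.cons_append, List.cons.injEq] at h
    exact absurd (h.2 ▸ by simp) ha

theorem List.eq_of_append_cons_eq_append_singleton {α : Type*} {a : α} {x₁ x₂ l : List α}
    (ha : a ∉ l) (h : x₁ ++ a :: x₂ = l ++ [a]) : x₁ = l ∧ x₂ = [] := by
  have h' : x₂.reverse ++ a :: x₁.reverse = a :: l.reverse := by
    simpa using congrArg List.reverse h
  obtain ⟨h₂, h₁⟩ := List.eq_nil_of_append_cons_eq_cons (by simpa using ha) h'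
  exact ⟨List.reverse_injective h₁, List.reverse_eq_nil_iff.mp h₂⟩

theorem wABC_injective : Function.Injective wABC := by
  intro m n h
  simpa [wABC] using congrArg List.length h

theorem wABC_shift_of_mem_ab {x₁ x₂ : List (Fin 3)}
    (h : x₁ ++ [0] ++ x₂ ∈ C1 ∨ x₁ ++ [0, 1] ++ x₂ ∈ C1) :
    ∃ n, x₁ ++ [0] ++ x₂ = wABC n ∧ x₁ ++ [0, 1] ++ x₂ = wABC (n + 1) := by
  suffices ∃ n, x₁ = [] ∧ x₂ = List.replicate n 1 ++ [2] by
    obtain ⟨n, rfl, rfl⟩ := this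
    exact ⟨n, rfl, rfl⟩
  rcases h with ⟨n, h⟩ | ⟨n, h⟩
  · exact ⟨n, List.eq_nil_of_append_cons_eq_cons (a := 0) (l := List.replicate n 1 ++ [2])
      (by simp [List.mem_replicate]) (by simpa [wABC] using h)⟩
  · obtain ⟨rfl, hx₂⟩ := List.eq_nil_of_append_cons_eq_cons (a := 0) (x₂ := 1 :: x₂)
      (l := List.replicate n 1 ++ [2]) (by simp [List.mem_replicate]) (by simpa [wABC] using h)
    rcases n with _ | n
    · simp at hx₂
    · exact ⟨n, rfl, by simpa [List.replicate_succ] using hx₂⟩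

theorem wABC_shift_of_mem_bc {x₁ x₂ : List (Fin 3)}
    (h : x₁ ++ [2] ++ x₂ ∈ C1 ∨ x₁ ++ [1, 2] ++ x₂ ∈ C1) :
    ∃ n, x₁ ++ [2] ++ x₂ = wABC n ∧ x₁ ++ [1, 2] ++ x₂ = wABC (n + 1) := by
  suffices ∃ n, x₁ = 0 :: List.replicate n 1 ∧ x₂ = [] by
    obtain ⟨n, rfl, rfl⟩ := this
    exact ⟨n, by simp [wABC], by simp [wABC, List.replicate_succ']⟩
  rcases h with ⟨n, h⟩ | ⟨n, h⟩
  · exact ⟨n, List.eq_of_append_cons_eq_append_singleton (a := 2) (l := 0 :: List.replicate n 1)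
      (by simp [List.mem_replicate]) (by simpa [wABC] using h)⟩
  · obtain ⟨hx₁, rfl⟩ := List.eq_of_append_cons_eq_append_singleton (a := 2) (x₁ := x₁ ++ [1])
      (l := 0 :: List.replicate n 1) (by simp [List.mem_replicate]) (by simpa [wABC] using h)
    rcases n with _ | n
    · simpa using congrArg List.getLast? hx₁
    · rw [List.replicate_succ', ← List.cons_append] at hx₁
      exact ⟨n, List.append_cancel_right hx₁, rfl⟩

theorem tsum_eq_tsum_wABC {P : List (Fin 3) → ℝ} (hP : ∀ s, P s ≠ 0 → s ∈ C1) :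
    ∑' s, P s = ∑' n, P (wABC n) :=
  (wABC_injective.tsum_eq fun s hs => (hP s hs).imp fun _ h => h.symm).symm

theorem apply_eq_mul_of_shift {P : List (Fin 3) → ℝ} {r : ℝ}
    (hP : ∀ n : ℕ, P (wABC n) = r * (1 - r) ^ n) (h0 : ∀ s, s ∉ C1 → P s = 0)
    {u v : List (Fin 3)} (huv : u ∈ C1 ∨ v ∈ C1 → ∃ n, u = wABC n ∧ v = wABC (n + 1)) :
    P v = P u * (1 - r) := by
  by_cases h : u ∈ C1 ∨ v ∈ C1
  · obtain ⟨n, rfl, rfl⟩ := huv h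
    rw [hP, hP, pow_succ, mul_assoc]
  · push Not at h
    rw [h0 _ h.1, h0 _ h.2, zero_mul]

theorem stmt15 :
    (∀ P : List (Fin 3) → ℝ, (∀ s, 0 ≤ P s) → (∑' s : List (Fin 3), P s) = 1 →
      (∀ s, P s ≠ 0 → s ∈ C1) → (∀ B ∈ Bfam, IsMarkovSet Dplus P B) →
      ∃ r ∈ Set.Ioo (0 : ℝ) 1, ∀ n : ℕ, P (wABC n) = r * (1 - r) ^ n) ∧
    (∀ r ∈ Set.Ioo (0 : ℝ) 1, ∀ P : List (Fin 3) → ℝ,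
      (∀ n : ℕ, P (wABC n) = r * (1 - r) ^ n) → (∀ s, s ∉ C1 → P s = 0) →
      ∀ B ∈ Bfam, IsMarkovSet Dplus P B) := by
  constructor
  · intro P _ hsum hsupp hmark
    obtain ⟨t, ht, hratio⟩ := (hmark {[0, 1], [0]} (by simp [Bfam])).exists_ratio
      (y := [0]) (y' := [0, 1]) (by simp) (by simp)
    refine exists_geometric_of_tsum_eq_one ht (fun n => ?_) (tsum_eq_tsum_wABC hsupp ▸ hsum)
    exact hratio [] (List.replicate n 1 ++ [2]) (by simp [Dplus]) (by simp [Dplus])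
  · rintro r ⟨-, hr1⟩ P hP h0 B (rfl | rfl)
    · exact isMarkovSet_pair Dplus (sub_pos.2 hr1)
        fun _ _ => apply_eq_mul_of_shift hP h0 wABC_shift_of_mem_ab
    · exact isMarkovSet_pair Dplus (sub_pos.2 hr1)
        fun _ _ => apply_eq_mul_of_shift hP h0 wABC_shift_of_mem_bc
end

section
/- On the state space D^L with the family 𝓑 = { α((a,b), D) : (a,b) ∈ D² } of substitute sets of middle letters, the equivalence classes of ∼_𝓑 on D^L are exactly the sets α((a,b), D^{L−2}) = { strings of length L starting with a and ending with b }, for (a,b) ∈ D². -/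
/-!
A substitution step keeps the first and the last letter of a word, so these two letters are
invariants of the generated equivalence. Conversely, between two words of the same length
sharing these letters, the interior letters can be replaced one at a time from left to right:
each replacement is a substitution step whose left neighbour is the already rewritten prefix
and whose right neighbour lies in the untouched suffix.
-/

/-- One-step substitution of the middle letter of a length-3 block. -/
def TripleRel {D : Type*} (w w' : List D) : Prop :=
  ∃ (x₁ x₂ : List D) (a y y' b : D),
    w = x₁ ++ [a, y, b] ++ x₂ ∧ w' = x₁ ++ [a, y', b] ++ x₂

namespace TripleRel

variable {D : Type*}

theorem head?_eq {w w' : List D} (h : TripleRel w w') : w.head? = w'.head? := by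
  obtain ⟨x₁, x₂, a, y, y', b, rfl, rfl⟩ := h
  cases x₁ <;> simp

theorem getLast?_eq {w w' : List D} (h : TripleRel w w') : w.getLast? = w'.getLast? := by
  obtain ⟨x₁, x₂, a, y, y', b, rfl, rfl⟩ := h
  simp [List.getLast?_append]

theorem append_singleton_append {p s : List D} (hp : p ≠ []) (hs : s ≠ []) (y y' : D) :
    TripleRel (p ++ [y] ++ s) (p ++ [y'] ++ s) := by
  obtain ⟨p₀, a, rfl⟩ := (List.eq_nil_or_concat' p).resolve_left hp
  obtain ⟨b, s₀, rfl⟩ := List.exists_cons_of_ne_nil hs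
  exact ⟨p₀, s₀, a, y, y', b, by simp, by simp⟩

end TripleRel

section

open Relation

variable {D : Type*}

theorem head?_eq_and_getLast?_eq_of_eqvGen_tripleRel {w w' : List D}
    (h : EqvGen TripleRel w w') : w.head? = w'.head? ∧ w.getLast? = w'.getLast? :=
  Prod.ext_iff.mp <| Setoid.eqvGen_le (s := Setoid.ker fun w : List D => (w.head?, w.getLast?))
    (fun _ _ h => Prod.ext h.head?_eq h.getLast?_eq) h

theorem eqvGen_tripleRel_append_append {p s : List D} (hp : p ≠ []) (hs : s ≠ []) :
    ∀ {m m' : List D}, m.length = m'.length → EqvGen TripleRel (p ++ m ++ s) (p ++ m' ++ s)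
  | [], [], _ => EqvGen.refl _
  | y :: m, y' :: m', hlen => by
    have hstep := EqvGen.rel _ _
      (TripleRel.append_singleton_append hp (s := m ++ s) (by simp [hs]) y y')
    have hrest := eqvGen_tripleRel_append_append (p := p ++ [y']) (by simp) hs
      (Nat.succ.inj hlen)
    simp only [List.append_assoc, List.singleton_append] at hstep hrest ⊢
    exact hstep.trans _ _ _ hrest

theorem eqvGen_tripleRel_iff {w w' : List D} (hlen : w.length = w'.length) :
    EqvGen TripleRel w w' ↔ w.head? = w'.head? ∧ w.getLast? = w'.getLast? := by
  refine ⟨head?_eq_and_getLast?_eq_of_eqvGen_tripleRel, fun ⟨hhead, hlast⟩ => ?_⟩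
  rcases w with _ | ⟨a, u⟩ <;> rcases w' with _ | ⟨a', u'⟩
  · exact EqvGen.refl _
  · simp at hlen
  · simp at hlen
  obtain rfl : a = a' := by simpa using hhead
  rcases u.eq_nil_or_concat' with rfl | ⟨m, b, rfl⟩ <;>
    rcases u'.eq_nil_or_concat' with rfl | ⟨m', b', rfl⟩
  · exact EqvGen.refl _
  · simp at hlen
  · simp at hlen
  obtain rfl : b = b' := by
    simpa only [← List.cons_append, List.getLast?_concat, Option.some_inj] using hlast
  simpa using eqvGen_tripleRel_append_append (p := [a]) (s := [b]) (by simp) (by simp)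
    (by simpa using hlen)

end

theorem stmt18_general {D : Type*} (L : ℕ) :
    ∀ w w' : List D, w.length = L → w'.length = L →
      (Relation.EqvGen (TripleRel (D := D)) w w' ↔
        (w.head? = w'.head? ∧ w.getLast? = w'.getLast?)) :=
  fun _ _ hw hw' => eqvGen_tripleRel_iff (hw.trans hw'.symm)

theorem stmt18 {D : Type*} [Fintype D] (hcard : 2 ≤ Fintype.card D)
    (L : ℕ) (hL : 3 ≤ L) :
    ∀ w w' : List D, w.length = L → w'.length = L →
      (Relation.EqvGen (TripleRel (D := D)) w w' ↔
        (w.head? = w'.head? ∧ w.getLast? = w'.getLast?)) :=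
  stmt18_general L
end

section
/- Let P be a probability measure on D^L (L ≥ 5, |D| ≥ 1) such that every set {[a,z,b] : z ∈ D}, (a,b) ∈ D², is a Markov substitute set of P with exponent β. Then for a fixed c ∈ D and all (a,y,y',b) ∈ D⁴: β([a,y,b],[a,y',b]) = β([a,c,c],[a,y',c]) + β([y',c,c],[y',b,c]) − β([a,c,c],[a,y,c]) − β([y,c,c],[y,b,c]). -/
/-! From `w₀ = c a c c c c…c` (length `L`) the word `c a y' b c c…c` is reached by two middle-letter
substitutions through `c a y' c c…c`, and by three through `c a y c c…c` and `c a y b c c…c`. Each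
substitution multiplies `P` by `exp β`, and `P w₀ > 0`, so the accumulated exponents agree. -/

lemma Real.eq_of_mul_exp_eq_mul_exp {p s t : ℝ} (hp : p ≠ 0)
    (h : p * Real.exp s = p * Real.exp t) : s = t :=
  Real.exp_injective (mul_left_cancel₀ hp h)

theorem stmt19_general {D : Type*} (L : ℕ) (hL : 5 ≤ L)
    (P : List D → ℝ) (β : List D → List D → ℝ)
    (hpos : ∀ w : List D, w.length = L → 0 < P w)
    (hβ : ∀ (a y y' b : D) (x₁ x₂ : List D), x₁.length + x₂.length = L - 3 →
      P (x₁ ++ [a, y', b] ++ x₂)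
        = P (x₁ ++ [a, y, b] ++ x₂) * Real.exp (β [a, y, b] [a, y', b]))
    (c : D) :
    ∀ a y y' b : D,
      β [a, y, b] [a, y', b]
        = β [a, c, c] [a, y', c] + β [y', c, c] [y', b, c]
          - β [a, c, c] [a, y, c] - β [y, c, c] [y, b, c] := by
  intro a y y' b
  set r := List.replicate (L - 5) c
  have hr : r.length = L - 5 := List.length_replicate
  have subst_third : ∀ y y' b : D, P (c :: a :: y' :: b :: c :: r)
      = P (c :: a :: y :: b :: c :: r) * Real.exp (β [a, y, b] [a, y', b]) := fun y y' b => by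
    simpa using hβ a y y' b [c] (c :: r) (by simp; omega)
  have subst_fourth : ∀ y b : D, P (c :: a :: y :: b :: c :: r)
      = P (c :: a :: y :: c :: c :: r) * Real.exp (β [y, c, c] [y, b, c]) := fun y b => by
    simpa using hβ y c b c [c, a] r (by simp; omega)
  have from_w₀ : ∀ y : D, P (c :: a :: y :: b :: c :: r)
      = P (c :: a :: c :: c :: c :: r)
        * Real.exp (β [a, c, c] [a, y, c] + β [y, c, c] [y, b, c]) := fun y => by
    rw [subst_fourth, subst_third c y c, Real.exp_add, mul_assoc]
  have hw₀ : P (c :: a :: c :: c :: c :: r) ≠ 0 := (hpos _ (by simp; omega)).ne'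
  have loop := from_w₀ y'
  rw [subst_third y y' b, from_w₀ y, mul_assoc, ← Real.exp_add] at loop
  linarith [Real.eq_of_mul_exp_eq_mul_exp hw₀ loop]

theorem stmt19 {D : Type*} [Fintype D] (L : ℕ) (hL : 5 ≤ L)
    (P : List D → ℝ) (β : List D → List D → ℝ)
    (hpos : ∀ w : List D, w.length = L → 0 < P w)
    (hskew : ∀ u v : List D, u.length = 3 → v.length = 3 → β u v = - β v u)
    (hβ : ∀ (a y y' b : D) (x₁ x₂ : List D), x₁.length + x₂.length = L - 3 →
      P (x₁ ++ [a, y', b] ++ x₂)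
        = P (x₁ ++ [a, y, b] ++ x₂) * Real.exp (β [a, y, b] [a, y', b]))
    (c : D) :
    ∀ a y y' b : D,
      β [a, y, b] [a, y', b]
        = β [a, c, c] [a, y', c] + β [y', c, c] [y', b, c]
          - β [a, c, c] [a, y, c] - β [y, c, c] [y, b, c] :=
  stmt19_general L hL P β hpos hβ c
end
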